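/- Let ρ be an X-type three-qubit state and let σ be its cyclic permutation to ordering CAB, i.e. σ_{(k,i,j),(k',i',j')} = ρ_{(i,j,k),(i',j',k')}. Let τ¹_{CA|B} = (1/√3)σ + ((3−√3)/3)·(Tr₃ σ ⊗ I₂/2), where Tr₃ traces out the third factor of σ. Define Q¹_{a,±} = ((2±√3)/2)ρ₂₂ρ₇₇ + ((2∓√3)/2)ρ₄₄ρ₅₅ + (1/2)(ρ₂₂ρ₅₅+ρ₄₄ρ₇₇) and Q¹_{b,±} = ((2±√3)/2)ρ₁₁ρ₈₈ + ((2∓√3)/2)ρ₃₃ρ₆₆ + (1/2)(ρ₁₁ρ₆₆+ρ₃₃ρ₈₈). If |ρ₁₈|² > Q¹_{a,+}, or |ρ₂₇|² > Q¹_{b,+}, or |ρ₃₆|² > Q¹_{a,−}, or |ρ₄₅|² > Q¹_{b,−}, then the partial transpose of τ¹_{CA|B} over its first qubit is not positive semidefinite (so τ¹_{CA|B} is entangled). -/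

import Mathlib

open scoped ComplexOrder

/-- Index type for three qubits: `(i, j, k)` with `m - 1 = 4i + 2j + k`. -/
abbrev Q3 : Type := Fin 2 × Fin 2 × Fin 2

/-- Partial transpose over the first qubit:
`(M^{T₁})_{(i,j,k),(i',j',k')} = M_{(i',j,k),(i,j',k')}`. -/
def ptA (M : Matrix Q3 Q3 ℂ) : Matrix Q3 Q3 ℂ :=
  Matrix.of fun p q : Q3 => M (q.1, p.2.1, p.2.2) (p.1, q.2.1, q.2.2)

/-- An X-type three-qubit state: positive semidefinite (hence Hermitian), trace one,
and the only possibly nonzero entries are on the diagonal and the anti-diagonal. -/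
def IsXType (ρ : Matrix Q3 Q3 ℂ) : Prop :=
  ρ.PosSemidef ∧ ρ.trace = 1 ∧
    ∀ p q : Q3, q ≠ p → q ≠ (1 - p.1, 1 - p.2.1, 1 - p.2.2) → ρ p q = 0

/-- Cyclic reordering of a three-qubit matrix to ordering CAB:
`σ_{(k,i,j),(k',i',j')} = ρ_{(i,j,k),(i',j',k')}`. -/
def sigmaCAB (ρ : Matrix Q3 Q3 ℂ) : Matrix Q3 Q3 ℂ :=
  Matrix.of fun p q : Q3 => ρ (p.2.1, p.2.2, p.1) (q.2.1, q.2.2, q.1)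

/-- The steered matrix `τ¹ = (1/√3) M + ((3-√3)/3) (Tr₃ M ⊗ I₂/2)`,
where `Tr₃` traces out the third qubit. -/
noncomputable def tauOne (M : Matrix Q3 Q3 ℂ) : Matrix Q3 Q3 ℂ :=
  (Real.sqrt 3 : ℂ)⁻¹ • M +
    (((3 - Real.sqrt 3) / 3 : ℝ) : ℂ) •
      Matrix.of (fun p q : Q3 =>
        (∑ k : Fin 2, M (p.1, p.2.1, k) (q.1, q.2.1, k)) *
          (if p.2.2 = q.2.2 then (1/2 : ℂ) else 0))

lemma herm_diag_real' {n : Type*} {N : Matrix n n ℂ} (hN : N.IsHermitian) (i : n) :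
    N i i = ((N i i).re : ℂ) := by
  refine Complex.ext (by simp) ?_
  simp only [Complex.ofReal_im]
  have h2 : (starRingEnd ℂ) (N i i) = N i i := by
    conv_rhs => rw [← hN]
    simp [Matrix.conjTranspose_apply]
  simpa using Complex.conj_eq_iff_im.mp h2

lemma fin2_psd {N : Matrix (Fin 2) (Fin 2) ℂ} (hN : N.PosSemidef) :
    ‖N 0 1‖ ^ 2 ≤ (N 0 0).re * (N 1 1).re := by
  have h10 : N 1 0 = (starRingEnd ℂ) (N 0 1) := by
    conv_lhs => rw [← hN.1]
    simp [Matrix.conjTranspose_apply]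
  set a := (N 0 0).re with ha
  set d := (N 1 1).re with hd
  set c := N 0 1 with hc
  have e00 : N 0 0 = (a : ℂ) := herm_diag_real' hN.1 0
  have e11 : N 1 1 = (d : ℂ) := herm_diag_real' hN.1 1
  set m := Complex.normSq c with hm
  have key : ∀ t : ℝ, 0 ≤ (m * a) * (t * t) + (2 * m) * t + d := by
    intro t
    have h := hN.dotProduct_mulVec_nonneg ![(t : ℂ) * c, 1]
    have hre := (Complex.le_def.mp h).1
    rw [dotProduct, Fin.sum_univ_two] at hre
    simp only [Matrix.mulVec, dotProduct, Fin.sum_univ_two, Matrix.cons_val_zero,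
      Matrix.cons_val_one, Matrix.head_cons, Pi.star_apply, e00, e11, h10,
      Complex.star_def, map_mul, Complex.conj_ofReal, Complex.zero_re,
      Complex.add_re, Complex.add_im, Complex.mul_re, Complex.mul_im,
      Complex.ofReal_re, Complex.ofReal_im, Complex.conj_re, Complex.conj_im,
      Complex.one_re, Complex.one_im, star_one] at hre
    rw [hm, Complex.normSq_apply]
    nlinarith [hre]
  have hd0 : 0 ≤ d := by have := key 0; linarith
  have ha0 : 0 ≤ a := by
    have h := hN.dotProduct_mulVec_nonneg ![1, 0]
    have hre := (Complex.le_def.mp h).1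
    rw [dotProduct, Fin.sum_univ_two] at hre
    simp only [Matrix.mulVec, dotProduct, Fin.sum_univ_two, Matrix.cons_val_zero,
      Matrix.cons_val_one, Matrix.head_cons, Pi.star_apply, e00] at hre
    simpa using hre
  have hdis := discrim_le_zero key
  rw [discrim] at hdis
  rw [Complex.sq_norm c]
  nlinarith [Complex.normSq_nonneg c, hdis, mul_nonneg ha0 hd0]

lemma entry_sq {n : Type*} [Fintype n] [DecidableEq n] {M : Matrix n n ℂ}
    (hM : M.PosSemidef) (p q : n) :
    ‖M p q‖ ^ 2 ≤ (M p p).re * (M q q).re := by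
  have h := fin2_psd (hM.submatrix ![p, q])
  simpa [Matrix.submatrix_apply] using h

/-- entanglement (NPT) criterion for `τ¹_{CA|B}`, witnessing steering from Bob to Charlie and Alice. -/
theorem tauOne_CAB_npt (ρ : Matrix Q3 Q3 ℂ) (hX : IsXType ρ)
    (r11 r22 r33 r44 r55 r66 r77 r88 c18 c27 c36 c45 : ℝ)
    (hr11 : r11 = (ρ (0,0,0) (0,0,0)).re)
    (hr22 : r22 = (ρ (0,0,1) (0,0,1)).re)
    (hr33 : r33 = (ρ (0,1,0) (0,1,0)).re)
    (hr44 : r44 = (ρ (0,1,1) (0,1,1)).re)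
    (hr55 : r55 = (ρ (1,0,0) (1,0,0)).re)
    (hr66 : r66 = (ρ (1,0,1) (1,0,1)).re)
    (hr77 : r77 = (ρ (1,1,0) (1,1,0)).re)
    (hr88 : r88 = (ρ (1,1,1) (1,1,1)).re)
    (hc18 : c18 = ‖ρ (0,0,0) (1,1,1)‖)
    (hc27 : c27 = ‖ρ (0,0,1) (1,1,0)‖)
    (hc36 : c36 = ‖ρ (0,1,0) (1,0,1)‖)
    (hc45 : c45 = ‖ρ (0,1,1) (1,0,0)‖)
    (Q1ap Q1am Q1bp Q1bm : ℝ)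
    (hQ1ap : Q1ap = (2 + Real.sqrt 3) / 2 * (r22 * r77) + (2 - Real.sqrt 3) / 2 * (r44 * r55) + 1/2 * (r22 * r55 + r44 * r77))
    (hQ1am : Q1am = (2 - Real.sqrt 3) / 2 * (r22 * r77) + (2 + Real.sqrt 3) / 2 * (r44 * r55) + 1/2 * (r22 * r55 + r44 * r77))
    (hQ1bp : Q1bp = (2 + Real.sqrt 3) / 2 * (r11 * r88) + (2 - Real.sqrt 3) / 2 * (r33 * r66) + 1/2 * (r11 * r66 + r33 * r88))
    (hQ1bm : Q1bm = (2 - Real.sqrt 3) / 2 * (r11 * r88) + (2 + Real.sqrt 3) / 2 * (r33 * r66) + 1/2 * (r11 * r66 + r33 * r88))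
    (h : c18 ^ 2 > Q1ap ∨
         c27 ^ 2 > Q1bp ∨
         c36 ^ 2 > Q1am ∨
         c45 ^ 2 > Q1bm) :
    ¬ (ptA (tauOne (sigmaCAB ρ))).PosSemidef := by
  intro hPSD
  have hherm : ρ.IsHermitian := hX.1.1
  have hs0 : (0:ℝ) ≤ Real.sqrt 3 := Real.sqrt_nonneg 3
  have hs3 : Real.sqrt 3 ^ 2 = 3 := Real.sq_sqrt (by norm_num)
  have hsinv : (Real.sqrt 3)⁻¹ = Real.sqrt 3 / 3 := by field_simp; exact hs3.symm
  have e1x : ρ ((0:Fin 2),(0:Fin 2),(0:Fin 2)) (0,0,0) = (r11 : ℂ) := by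
    rw [hr11]; exact herm_diag_real' hherm _
  have e2x : ρ ((0:Fin 2),(0:Fin 2),(1:Fin 2)) (0,0,1) = (r22 : ℂ) := by
    rw [hr22]; exact herm_diag_real' hherm _
  have e3x : ρ ((0:Fin 2),(1:Fin 2),(0:Fin 2)) (0,1,0) = (r33 : ℂ) := by
    rw [hr33]; exact herm_diag_real' hherm _
  have e4x : ρ ((0:Fin 2),(1:Fin 2),(1:Fin 2)) (0,1,1) = (r44 : ℂ) := by
    rw [hr44]; exact herm_diag_real' hherm _
  have e5x : ρ ((1:Fin 2),(0:Fin 2),(0:Fin 2)) (1,0,0) = (r55 : ℂ) := by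
    rw [hr55]; exact herm_diag_real' hherm _
  have e6x : ρ ((1:Fin 2),(0:Fin 2),(1:Fin 2)) (1,0,1) = (r66 : ℂ) := by
    rw [hr66]; exact herm_diag_real' hherm _
  have e7x : ρ ((1:Fin 2),(1:Fin 2),(0:Fin 2)) (1,1,0) = (r77 : ℂ) := by
    rw [hr77]; exact herm_diag_real' hherm _
  have e8x : ρ ((1:Fin 2),(1:Fin 2),(1:Fin 2)) (1,1,1) = (r88 : ℂ) := by
    rw [hr88]; exact herm_diag_real' hherm _
  have hD100 : ptA (tauOne (sigmaCAB ρ)) ((1:Fin 2),(0:Fin 2),(0:Fin 2)) (1,0,0)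
      = (((3+Real.sqrt 3)/6 * r22 + (3-Real.sqrt 3)/6 * r44 : ℝ) : ℂ) := by
    simp [ptA, tauOne, sigmaCAB, Fin.sum_univ_two, e2x, e4x,
      -Prod.mk_one_one, -Prod.mk_zero_zero]
    rw [← Complex.ofReal_inv, hsinv]
    push_cast
    ring
  have hD011 : ptA (tauOne (sigmaCAB ρ)) ((0:Fin 2),(1:Fin 2),(1:Fin 2)) (0,1,1)
      = (((3+Real.sqrt 3)/6 * r77 + (3-Real.sqrt 3)/6 * r55 : ℝ) : ℂ) := by
    simp [ptA, tauOne, sigmaCAB, Fin.sum_univ_two, e7x, e5x,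
      -Prod.mk_one_one, -Prod.mk_zero_zero]
    rw [← Complex.ofReal_inv, hsinv]
    push_cast
    ring
  have hD000 : ptA (tauOne (sigmaCAB ρ)) ((0:Fin 2),(0:Fin 2),(0:Fin 2)) (0,0,0)
      = (((3+Real.sqrt 3)/6 * r11 + (3-Real.sqrt 3)/6 * r33 : ℝ) : ℂ) := by
    simp [ptA, tauOne, sigmaCAB, Fin.sum_univ_two, e1x, e3x,
      -Prod.mk_one_one, -Prod.mk_zero_zero]
    rw [← Complex.ofReal_inv, hsinv]
    push_cast
    ring
  have hD111 : ptA (tauOne (sigmaCAB ρ)) ((1:Fin 2),(1:Fin 2),(1:Fin 2)) (1,1,1)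
      = (((3+Real.sqrt 3)/6 * r88 + (3-Real.sqrt 3)/6 * r66 : ℝ) : ℂ) := by
    simp [ptA, tauOne, sigmaCAB, Fin.sum_univ_two, e8x, e6x,
      -Prod.mk_one_one, -Prod.mk_zero_zero]
    rw [← Complex.ofReal_inv, hsinv]
    push_cast
    ring
  have hD101 : ptA (tauOne (sigmaCAB ρ)) ((1:Fin 2),(0:Fin 2),(1:Fin 2)) (1,0,1)
      = (((3+Real.sqrt 3)/6 * r44 + (3-Real.sqrt 3)/6 * r22 : ℝ) : ℂ) := by
    simp [ptA, tauOne, sigmaCAB, Fin.sum_univ_two, e4x, e2x,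
      -Prod.mk_one_one, -Prod.mk_zero_zero]
    rw [← Complex.ofReal_inv, hsinv]
    push_cast
    ring
  have hD010 : ptA (tauOne (sigmaCAB ρ)) ((0:Fin 2),(1:Fin 2),(0:Fin 2)) (0,1,0)
      = (((3+Real.sqrt 3)/6 * r55 + (3-Real.sqrt 3)/6 * r77 : ℝ) : ℂ) := by
    simp [ptA, tauOne, sigmaCAB, Fin.sum_univ_two, e5x, e7x,
      -Prod.mk_one_one, -Prod.mk_zero_zero]
    rw [← Complex.ofReal_inv, hsinv]
    push_cast
    ring
  have hD001 : ptA (tauOne (sigmaCAB ρ)) ((0:Fin 2),(0:Fin 2),(1:Fin 2)) (0,0,1)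
      = (((3+Real.sqrt 3)/6 * r33 + (3-Real.sqrt 3)/6 * r11 : ℝ) : ℂ) := by
    simp [ptA, tauOne, sigmaCAB, Fin.sum_univ_two, e3x, e1x,
      -Prod.mk_one_one, -Prod.mk_zero_zero]
    rw [← Complex.ofReal_inv, hsinv]
    push_cast
    ring
  have hD110 : ptA (tauOne (sigmaCAB ρ)) ((1:Fin 2),(1:Fin 2),(0:Fin 2)) (1,1,0)
      = (((3+Real.sqrt 3)/6 * r66 + (3-Real.sqrt 3)/6 * r88 : ℝ) : ℂ) := by
    simp [ptA, tauOne, sigmaCAB, Fin.sum_univ_two, e6x, e8x,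
      -Prod.mk_one_one, -Prod.mk_zero_zero]
    rw [← Complex.ofReal_inv, hsinv]
    push_cast
    ring
  rcases h with hc | hc | hc | hc
  · have hle := entry_sq hPSD (((1:Fin 2),(0:Fin 2),(0:Fin 2)) : Q3) (((0:Fin 2),(1:Fin 2),(1:Fin 2)) : Q3)
    have hpq : ptA (tauOne (sigmaCAB ρ)) ((1:Fin 2),(0:Fin 2),(0:Fin 2)) (0,1,1)
        = ((Real.sqrt 3 : ℂ))⁻¹ * ρ (0,0,0) (1,1,1) := by
      simp [ptA, tauOne, sigmaCAB, -Prod.mk_one_one, -Prod.mk_zero_zero]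
    rw [hpq, hD100, hD011] at hle
    rw [norm_mul, norm_inv, Complex.norm_real, Real.norm_eq_abs, abs_of_nonneg hs0, ← hc18, hsinv] at hle
    simp only [Complex.ofReal_re] at hle
    have hL : (Real.sqrt 3 / 3 * c18) ^ 2 = c18 ^ 2 / 3 := by
      rw [mul_pow, div_pow, hs3]; ring
    have hAB : ((3+Real.sqrt 3)/6 * r22 + (3-Real.sqrt 3)/6 * r44) *
        ((3+Real.sqrt 3)/6 * r77 + (3-Real.sqrt 3)/6 * r55) = Q1ap / 3 := by
      rw [hQ1ap]
      linear_combination ((r22*r77 + r44*r55 - r22*r55 - r44*r77)/36) * hs3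
    rw [hL, hAB] at hle
    linarith
  · have hle := entry_sq hPSD (((0:Fin 2),(0:Fin 2),(0:Fin 2)) : Q3) (((1:Fin 2),(1:Fin 2),(1:Fin 2)) : Q3)
    have hpq : ptA (tauOne (sigmaCAB ρ)) ((0:Fin 2),(0:Fin 2),(0:Fin 2)) (1,1,1)
        = ((Real.sqrt 3 : ℂ))⁻¹ * ρ (0,0,1) (1,1,0) := by
      simp [ptA, tauOne, sigmaCAB, -Prod.mk_one_one, -Prod.mk_zero_zero]
    rw [hpq, hD000, hD111] at hle
    rw [norm_mul, norm_inv, Complex.norm_real, Real.norm_eq_abs, abs_of_nonneg hs0, ← hc27, hsinv] at hle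
    simp only [Complex.ofReal_re] at hle
    have hL : (Real.sqrt 3 / 3 * c27) ^ 2 = c27 ^ 2 / 3 := by
      rw [mul_pow, div_pow, hs3]; ring
    have hAB : ((3+Real.sqrt 3)/6 * r11 + (3-Real.sqrt 3)/6 * r33) *
        ((3+Real.sqrt 3)/6 * r88 + (3-Real.sqrt 3)/6 * r66) = Q1bp / 3 := by
      rw [hQ1bp]
      linear_combination ((r11*r88 + r33*r66 - r11*r66 - r33*r88)/36) * hs3
    rw [hL, hAB] at hle
    linarith
  · have hle := entry_sq hPSD (((1:Fin 2),(0:Fin 2),(1:Fin 2)) : Q3) (((0:Fin 2),(1:Fin 2),(0:Fin 2)) : Q3)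
    have hpq : ptA (tauOne (sigmaCAB ρ)) ((1:Fin 2),(0:Fin 2),(1:Fin 2)) (0,1,0)
        = ((Real.sqrt 3 : ℂ))⁻¹ * ρ (0,1,0) (1,0,1) := by
      simp [ptA, tauOne, sigmaCAB, -Prod.mk_one_one, -Prod.mk_zero_zero]
    rw [hpq, hD101, hD010] at hle
    rw [norm_mul, norm_inv, Complex.norm_real, Real.norm_eq_abs, abs_of_nonneg hs0, ← hc36, hsinv] at hle
    simp only [Complex.ofReal_re] at hle
    have hL : (Real.sqrt 3 / 3 * c36) ^ 2 = c36 ^ 2 / 3 := by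
      rw [mul_pow, div_pow, hs3]; ring
    have hAB : ((3+Real.sqrt 3)/6 * r44 + (3-Real.sqrt 3)/6 * r22) *
        ((3+Real.sqrt 3)/6 * r55 + (3-Real.sqrt 3)/6 * r77) = Q1am / 3 := by
      rw [hQ1am]
      linear_combination ((r44*r55 + r22*r77 - r44*r77 - r22*r55)/36) * hs3
    rw [hL, hAB] at hle
    linarith
  · have hle := entry_sq hPSD (((0:Fin 2),(0:Fin 2),(1:Fin 2)) : Q3) (((1:Fin 2),(1:Fin 2),(0:Fin 2)) : Q3)
    have hpq : ptA (tauOne (sigmaCAB ρ)) ((0:Fin 2),(0:Fin 2),(1:Fin 2)) (1,1,0)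
        = ((Real.sqrt 3 : ℂ))⁻¹ * ρ (0,1,1) (1,0,0) := by
      simp [ptA, tauOne, sigmaCAB, -Prod.mk_one_one, -Prod.mk_zero_zero]
    rw [hpq, hD001, hD110] at hle
    rw [norm_mul, norm_inv, Complex.norm_real, Real.norm_eq_abs, abs_of_nonneg hs0, ← hc45, hsinv] at hle
    simp only [Complex.ofReal_re] at hle
    have hL : (Real.sqrt 3 / 3 * c45) ^ 2 = c45 ^ 2 / 3 := by
      rw [mul_pow, div_pow, hs3]; ring
    have hAB : ((3+Real.sqrt 3)/6 * r33 + (3-Real.sqrt 3)/6 * r11) *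
        ((3+Real.sqrt 3)/6 * r66 + (3-Real.sqrt 3)/6 * r88) = Q1bm / 3 := by
      rw [hQ1bm]
      linear_combination ((r33*r66 + r11*r88 - r33*r88 - r11*r66)/36) * hs3
    rw [hL, hAB] at hle
    linarith
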